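/- arXiv:2003.12741 — 7 statements merged into one kernel-verified Lean document; each statement's English description precedes it below -/
import Mathlib

section
/- If S is a 2-isometry on a Hilbert space, then there is a constant K such that ‖Sⁿ‖² ≤ K·(n+1) for all n ≥ 0; i.e., the powers of a 2-isometry grow at most like √n in norm. -/
/-!
The defining identity says that the second difference of `m ↦ ‖Sᵐ x‖²` vanishes, so this sequence
is an arithmetic progression: `‖Sᵐ x‖² = ‖x‖² + m (‖S x‖² - ‖x‖²) ≤ (1 + m ‖S‖²) ‖x‖²`.
Taking the supremum over unit vectors gives `‖Sⁿ‖² ≤ (1 + ‖S‖²)(n + 1)`.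
-/

theorem eq_add_mul_sub_of_second_diff_eq_zero {R : Type*} [CommRing R] {a : ℕ → R}
    (h : ∀ m, a (m + 2) - 2 * a (m + 1) + a m = 0) (m : ℕ) :
    a m = a 0 + m * (a 1 - a 0) := by
  have hstep : ∀ m, a (m + 1) - a m = a 1 - a 0 := by
    intro m
    induction m with
    | zero => rfl
    | succ k ih => linear_combination h k + ih
  induction m with
  | zero => simp
  | succ k ih =>
    push_cast
    linear_combination hstep k + ih

theorem ContinuousLinearMap.opNorm_sq_le_of_norm_sq_le {𝕜 E F : Type*}
    [NontriviallyNormedField 𝕜] [SeminormedAddCommGroup E] [SeminormedAddCommGroup F]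
    [NormedSpace 𝕜 E] [NormedSpace 𝕜 F] (f : E →L[𝕜] F) {C : ℝ} (hC : 0 ≤ C)
    (h : ∀ x, ‖f x‖ ^ 2 ≤ C * ‖x‖ ^ 2) : ‖f‖ ^ 2 ≤ C := by
  refine (Real.le_sqrt (norm_nonneg f) hC).1 (f.opNorm_le_bound (Real.sqrt_nonneg C) fun x => ?_)
  rw [← Real.sqrt_sq (norm_nonneg (f x)), ← Real.sqrt_sq (norm_nonneg x), ← Real.sqrt_mul hC]
  exact Real.sqrt_le_sqrt (h x)

def IsTwoIsometry {E : Type*} [SeminormedAddCommGroup E] (f : E → E) : Prop :=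
  ∀ x, ‖f (f x)‖ ^ 2 - 2 * ‖f x‖ ^ 2 + ‖x‖ ^ 2 = 0

namespace IsTwoIsometry

variable {E : Type*} [SeminormedAddCommGroup E]

theorem norm_sq_iterate {f : E → E} (hf : IsTwoIsometry f) (x : E) (m : ℕ) :
    ‖f^[m] x‖ ^ 2 = ‖x‖ ^ 2 + m * (‖f x‖ ^ 2 - ‖x‖ ^ 2) :=
  eq_add_mul_sub_of_second_diff_eq_zero (a := fun m => ‖f^[m] x‖ ^ 2)
    (fun m => by simpa only [Function.iterate_succ_apply'] using hf (f^[m] x)) m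

variable {𝕜 : Type*} [NontriviallyNormedField 𝕜] [NormedSpace 𝕜 E] {S : E →L[𝕜] E}

theorem norm_sq_pow_apply_le (hS : IsTwoIsometry S) (n : ℕ) (x : E) :
    ‖(S ^ n) x‖ ^ 2 ≤ (1 + ‖S‖ ^ 2) * (n + 1) * ‖x‖ ^ 2 := by
  have hSx : ‖S x‖ ^ 2 ≤ ‖S‖ ^ 2 * ‖x‖ ^ 2 := by
    rw [← mul_pow]
    gcongr
    exact S.le_opNorm x
  have hn : (0 : ℝ) ≤ n := n.cast_nonneg
  calc ‖(S ^ n) x‖ ^ 2 = ‖x‖ ^ 2 + n * (‖S x‖ ^ 2 - ‖x‖ ^ 2) := by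
        rw [FunLike.coe_pow_eq_iterate, hS.norm_sq_iterate]
    _ ≤ ‖x‖ ^ 2 + n * (‖S‖ ^ 2 * ‖x‖ ^ 2) := by
        gcongr
        linarith [sq_nonneg ‖x‖]
    _ ≤ (1 + ‖S‖ ^ 2) * (n + 1) * ‖x‖ ^ 2 := by
        linarith [mul_nonneg (add_nonneg (sq_nonneg ‖S‖) hn) (sq_nonneg ‖x‖)]

theorem norm_sq_pow_le (hS : IsTwoIsometry S) (n : ℕ) :
    ‖S ^ n‖ ^ 2 ≤ (1 + ‖S‖ ^ 2) * (n + 1) :=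
  (S ^ n).opNorm_sq_le_of_norm_sq_le (by positivity) (hS.norm_sq_pow_apply_le n)

end IsTwoIsometry

theorem two_isometry_power_growth_general
    {H : Type*} [NormedAddCommGroup H] [InnerProductSpace ℂ H]
    (S : H →L[ℂ] H)
    (h2 : ∀ x : H, ‖S (S x)‖ ^ 2 - 2 * ‖S x‖ ^ 2 + ‖x‖ ^ 2 = 0) :
    ∃ K : ℝ, ∀ n : ℕ, ‖S ^ n‖ ^ 2 ≤ K * (n + 1) :=
  ⟨1 + ‖S‖ ^ 2, IsTwoIsometry.norm_sq_pow_le h2⟩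

/-- The powers of a 2-isometry grow at most like `√n` in norm: there is a
constant `K` with `‖Sⁿ‖² ≤ K (n+1)` for all `n ≥ 0`. -/
theorem two_isometry_power_growth
    {H : Type*} [NormedAddCommGroup H] [InnerProductSpace ℂ H] [CompleteSpace H]
    (S : H →L[ℂ] H)
    (h2 : ∀ x : H, ‖S (S x)‖ ^ 2 - 2 * ‖S x‖ ^ 2 + ‖x‖ ^ 2 = 0) :
    ∃ K : ℝ, ∀ n : ℕ, ‖S ^ n‖ ^ 2 ≤ K * (n + 1) :=
  two_isometry_power_growth_general S h2
end

section
/- Let T be a bounded operator on a Hilbert space H, let Δ = (T*²T²)/2 - T*T + I/2, and suppose Δ ≥ 0 (T is convex). Define T₁ on H ⊕ H by the block matrix T₁ = [[T, 0], [Δ^{1/2}, 0]]. Then for every h ∈ H ≅ H ⊕ {0} and every n ≥ 1, ‖T₁ⁿ(h,0)‖² = (‖T^{n+1}h‖² + ‖T^{n-1}h‖²)/2. -/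
open ContinuousLinearMap

/-!
On `H ⊕ {0}` the lifted operator acts by `T₁ⁿ⁺¹(h, 0) = (Tⁿ⁺¹h, Δ^{1/2}Tⁿh)`, so
`‖T₁ⁿ⁺¹(h, 0)‖² = ‖Tⁿ⁺¹h‖² + ⟪Δ Tⁿh, Tⁿh⟫`, and the quadratic form of
`Δ = (T*²T² - 2T*T + I)/2` is `⟪Δ y, y⟫ = (‖T²y‖² - 2‖Ty‖² + ‖y‖²)/2`.
-/

section

variable {𝕜 E : Type*} [RCLike 𝕜] [NormedAddCommGroup E] [InnerProductSpace 𝕜 E]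
  [CompleteSpace E]

theorem ContinuousLinearMap.re_inner_adjoint_sq_comp_sq_sub_two_smul_add_one (T : E →L[𝕜] E)
    (x : E) :
    RCLike.re (inner 𝕜 x
        ((adjoint (T ^ 2) ∘L T ^ 2 - (2 : 𝕜) • (adjoint T ∘L T) + 1 : E →L[𝕜] E) x)) =
      ‖(T ^ 2) x‖ ^ 2 - 2 * ‖T x‖ ^ 2 + ‖x‖ ^ 2 := by
  rw [apply_norm_sq_eq_inner_adjoint_right (T ^ 2), apply_norm_sq_eq_inner_adjoint_right T,
    ← inner_self_eq_norm_sq (𝕜 := 𝕜)]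
  simp only [add_apply, sub_apply, smul_apply, inner_add_right, inner_sub_right,
    inner_smul_right, map_add, map_sub]
  simp

theorem IsSelfAdjoint.norm_sq_apply_eq_re_inner_comp_self {D : E →L[𝕜] E}
    (hD : IsSelfAdjoint D) (x : E) :
    ‖D x‖ ^ 2 = RCLike.re (inner 𝕜 x ((D ∘L D) x)) := by
  rw [apply_norm_sq_eq_inner_adjoint_right, hD.adjoint_eq]

theorem ContinuousLinearMap.norm_sq_apply_of_comp_self_eq {T D : E →L[𝕜] E}
    (hD : IsSelfAdjoint D)
    (hDD : D ∘L D =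
      (2 : 𝕜)⁻¹ • (adjoint (T ^ 2) ∘L (T ^ 2) - (2 : 𝕜) • (adjoint T ∘L T) + 1))
    (x : E) :
    ‖D x‖ ^ 2 = (‖(T ^ 2) x‖ ^ 2 - 2 * ‖T x‖ ^ 2 + ‖x‖ ^ 2) / 2 := by
  have half : (2 : 𝕜)⁻¹ = ((2⁻¹ : ℝ) : 𝕜) := by push_cast; rfl
  rw [hD.norm_sq_apply_eq_re_inner_comp_self, hDD, smul_apply, inner_smul_right, half,
    RCLike.re_ofReal_mul, re_inner_adjoint_sq_comp_sq_sub_two_smul_add_one]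
  ring

end

theorem WithLp.prod_pow_succ_apply_inl {𝕜 E F : Type*} [NontriviallyNormedField 𝕜]
    [NormedAddCommGroup E] [NormedSpace 𝕜 E] [NormedAddCommGroup F] [NormedSpace 𝕜 F]
    {p : ENNReal} [Fact (1 ≤ p)] (T : E →L[𝕜] E) (D : E →L[𝕜] F)
    {T₁ : WithLp p (E × F) →L[𝕜] WithLp p (E × F)}
    (hT₁ : ∀ u, T₁ u = (WithLp.equiv p (E × F)).symm (T u.fst, D u.fst)) (x : E) (n : ℕ) :
    (T₁ ^ (n + 1)) ((WithLp.equiv p (E × F)).symm (x, 0)) =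
      (WithLp.equiv p (E × F)).symm ((T ^ (n + 1)) x, D ((T ^ n) x)) := by
  induction n with
  | zero => simp [hT₁]
  | succ n ih =>
    rw [pow_succ', mul_apply_eq_comp, ih, hT₁, pow_succ' T (n + 1), mul_apply_eq_comp]
    rfl

theorem convex_lifting_step_norm_identity_general
    {H : Type*} [NormedAddCommGroup H] [InnerProductSpace ℂ H] [CompleteSpace H]
    (T D : H →L[ℂ] H)
    (hDpos : D.IsPositive)
    (hDD : D ∘L D =
      (2 : ℂ)⁻¹ • (adjoint (T ^ 2) ∘L (T ^ 2) - (2 : ℂ) • (adjoint T ∘L T) + 1))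
    (T₁ : WithLp 2 (H × H) →L[ℂ] WithLp 2 (H × H))
    (hT₁ : ∀ u : WithLp 2 (H × H),
      T₁ u = (WithLp.equiv 2 (H × H)).symm (T u.fst, D u.fst)) :
    ∀ (h : H) (n : ℕ), 1 ≤ n →
      ‖(T₁ ^ n) ((WithLp.equiv 2 (H × H)).symm (h, 0))‖ ^ 2 =
        (‖(T ^ (n + 1)) h‖ ^ 2 + ‖(T ^ (n - 1)) h‖ ^ 2) / 2 := by
  intro h n hn
  obtain ⟨m, rfl⟩ := Nat.exists_eq_add_of_le' hn
  rw [WithLp.prod_pow_succ_apply_inl T D hT₁, WithLp.prod_norm_sq_eq_of_L2]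
  have hT2 : (T ^ 2) ((T ^ m) h) = (T ^ (m + 1 + 1)) h := by
    rw [← mul_apply_eq_comp, ← pow_add, add_comm]
  have hT1 : T ((T ^ m) h) = (T ^ (m + 1)) h := by rw [pow_succ', mul_apply_eq_comp]
  simp only [WithLp.equiv_symm_apply, WithLp.toLp_fst, WithLp.toLp_snd, Nat.add_sub_cancel,
    norm_sq_apply_of_comp_self_eq hDpos.isSelfAdjoint hDD, hT2, hT1]
  ring

/-- For a convex operator `T` (i.e. `Δ = (T*²T² - 2T*T + I)/2 ≥ 0`) and
`T₁ = [[T,0],[Δ^{1/2},0]]` on the Hilbert direct sum `H ⊕ H`, one has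
`‖T₁ⁿ(h,0)‖² = (‖T^{n+1}h‖² + ‖T^{n-1}h‖²)/2` for all `h ∈ H`, `n ≥ 1`. -/
theorem convex_lifting_step_norm_identity
    {H : Type*} [NormedAddCommGroup H] [InnerProductSpace ℂ H] [CompleteSpace H]
    (T D : H →L[ℂ] H)
    (hDpos : D.IsPositive)
    (hDD : D ∘L D =
      (2 : ℂ)⁻¹ • (adjoint (T ^ 2) ∘L (T ^ 2) - (2 : ℂ) • (adjoint T ∘L T) + 1))
    (hconv : (adjoint (T ^ 2) ∘L (T ^ 2) - (2 : ℂ) • (adjoint T ∘L T) + 1).IsPositive)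
    (T₁ : WithLp 2 (H × H) →L[ℂ] WithLp 2 (H × H))
    (hT₁ : ∀ u : WithLp 2 (H × H),
      T₁ u = (WithLp.equiv 2 (H × H)).symm (T u.fst, D u.fst)) :
    ∀ (h : H) (n : ℕ), 1 ≤ n →
      ‖(T₁ ^ n) ((WithLp.equiv 2 (H × H)).symm (h, 0))‖ ^ 2 =
        (‖(T ^ (n + 1)) h‖ ^ 2 + ‖(T ^ (n - 1)) h‖ ^ 2) / 2 :=
  convex_lifting_step_norm_identity_general T D hDpos hDD T₁ hT₁
end

section
/- With T convex satisfying sup_{n≥0} ‖Tⁿ‖²/(n+1) = c < ∞, the operator T₁ = [[T,0],[Δ^{1/2},0]] on H ⊕ H (with Δ = (T*²T² - 2T*T + I)/2 ≥ 0) satisfies ‖T₁ⁿ‖² ≤ c(n+1) for all n ≥ 0. -/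
/-!
Since `D` is self-adjoint, `‖D x‖² = re ⟪D² x, x⟫ = (‖T² x‖² - 2‖T x‖² + ‖x‖²) / 2`. The iterates
of `T₁` are `T₁ⁿ⁺¹ (x, y) = (Tⁿ⁺¹ x, D Tⁿ x)`, so `‖T₁ⁿ⁺¹ (x, y)‖²` is the average of `‖Tⁿ⁺² x‖²`
and `‖Tⁿ x‖²`, which is at most `c ((n + 3) + (n + 1)) / 2 ‖x‖² = c (n + 2) ‖x‖²`.
-/

open ContinuousLinearMap
open scoped InnerProductSpace

namespace ContinuousLinearMap

variable {𝕜 E F : Type*} [NontriviallyNormedField 𝕜] [NormedAddCommGroup E] [NormedSpace 𝕜 E]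
  [NormedAddCommGroup F] [NormedSpace 𝕜 F]

theorem norm_apply_sq_le (A : E →L[𝕜] F) (x : E) : ‖A x‖ ^ 2 ≤ ‖A‖ ^ 2 * ‖x‖ ^ 2 := by
  rw [← mul_pow]
  exact pow_le_pow_left₀ (norm_nonneg _) (A.le_opNorm x) 2

theorem opNorm_sq_le_of_norm_apply_sq_le (A : E →L[𝕜] F) {M : ℝ} (hM : 0 ≤ M)
    (h : ∀ x, ‖A x‖ ^ 2 ≤ M * ‖x‖ ^ 2) : ‖A‖ ^ 2 ≤ M := by
  have hA : ‖A‖ ≤ √M := A.opNorm_le_bound (Real.sqrt_nonneg M) fun x => by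
    rw [← Real.sqrt_sq (norm_nonneg x), ← Real.sqrt_mul hM]
    exact Real.le_sqrt_of_sq_le (h x)
  simpa [Real.sq_sqrt hM] using pow_le_pow_left₀ (norm_nonneg A) hA 2

variable {p : ENNReal} {T : E →L[𝕜] E} {D : E →L[𝕜] F}
  {T₁ : WithLp p (E × F) →L[𝕜] WithLp p (E × F)}

theorem pow_succ_apply_of_apply_eq
    (hT₁ : ∀ u, T₁ u = (WithLp.equiv p (E × F)).symm (T u.fst, D u.fst))
    (m : ℕ) (u : WithLp p (E × F)) :
    (T₁ ^ (m + 1)) u = (WithLp.equiv p (E × F)).symm ((T ^ (m + 1)) u.fst, D ((T ^ m) u.fst)) := by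
  induction m generalizing u with
  | zero => simp [hT₁]
  | succ m ih =>
    rw [pow_succ, mul_apply_eq_comp, ih, hT₁, pow_succ T (m + 1), pow_succ T m]
    rfl

end ContinuousLinearMap

section SelfAdjoint

variable {𝕜 H : Type*} [RCLike 𝕜] [NormedAddCommGroup H] [InnerProductSpace 𝕜 H] [CompleteSpace H]
  {T D : H →L[𝕜] H}

open RCLike in
theorem norm_apply_sq_eq_of_comp_self_eq (hD : IsSelfAdjoint D)
    (hDD : D ∘L D = (2 : 𝕜)⁻¹ • (adjoint (T ^ 2) ∘L (T ^ 2) - (2 : 𝕜) • (adjoint T ∘L T) + 1))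
    (x : H) : ‖D x‖ ^ 2 = (‖(T ^ 2) x‖ ^ 2 - 2 * ‖T x‖ ^ 2 + ‖x‖ ^ 2) / 2 :=
  calc ‖D x‖ ^ 2 = re ⟪(D ∘L D) x, x⟫_𝕜 := by
        rw [apply_norm_sq_eq_inner_adjoint_left, hD.adjoint_eq]
    _ = (re ⟪(adjoint (T ^ 2) ∘L (T ^ 2)) x, x⟫_𝕜 - 2 * re ⟪(adjoint T ∘L T) x, x⟫_𝕜
          + re ⟪x, x⟫_𝕜) / 2 := by
        rw [hDD]
        simp only [smul_apply, add_apply, sub_apply, one_apply_eq_self, inner_smul_left,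
          inner_add_left, inner_sub_left, map_add, map_sub, map_inv₀, conj_ofNat, inv_re, mul_re,
          ofNat_re, ofNat_im, inv_im, normSq_eq_def', norm_ofNat, zero_mul, sub_zero]
        ring
    _ = _ := by
        rw [← apply_norm_sq_eq_inner_adjoint_left, ← apply_norm_sq_eq_inner_adjoint_left,
          inner_self_eq_norm_sq]

theorem norm_sq_pow_succ_apply_of_apply_eq {T₁ : WithLp 2 (H × H) →L[𝕜] WithLp 2 (H × H)}
    (hD : IsSelfAdjoint D)
    (hDD : D ∘L D = (2 : 𝕜)⁻¹ • (adjoint (T ^ 2) ∘L (T ^ 2) - (2 : 𝕜) • (adjoint T ∘L T) + 1))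
    (hT₁ : ∀ u, T₁ u = (WithLp.equiv 2 (H × H)).symm (T u.fst, D u.fst))
    (m : ℕ) (u : WithLp 2 (H × H)) :
    ‖(T₁ ^ (m + 1)) u‖ ^ 2 = (‖(T ^ (m + 2)) u.fst‖ ^ 2 + ‖(T ^ m) u.fst‖ ^ 2) / 2 := by
  have h₁ : T ((T ^ m) u.fst) = (T ^ (m + 1)) u.fst := by rw [pow_succ', mul_apply_eq_comp]
  have h₂ : (T ^ 2) ((T ^ m) u.fst) = (T ^ (m + 2)) u.fst := by
    rw [← mul_apply_eq_comp, ← pow_add, add_comm]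
  rw [pow_succ_apply_of_apply_eq hT₁, WithLp.prod_norm_sq_eq_of_L2]
  simp only [WithLp.equiv_symm_apply, WithLp.toLp_fst, WithLp.toLp_snd]
  rw [norm_apply_sq_eq_of_comp_self_eq hD hDD, h₁, h₂]
  ring

end SelfAdjoint

theorem convex_lifting_step_growth_general
    {H : Type*} [NormedAddCommGroup H] [InnerProductSpace ℂ H] [CompleteSpace H]
    (T D : H →L[ℂ] H) (c : ℝ)
    (hc : ∀ n : ℕ, ‖T ^ n‖ ^ 2 ≤ c * (n + 1))
    (hDpos : D.IsPositive)
    (hDD : D ∘L D =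
      (2 : ℂ)⁻¹ • (adjoint (T ^ 2) ∘L (T ^ 2) - (2 : ℂ) • (adjoint T ∘L T) + 1))
    (T₁ : WithLp 2 (H × H) →L[ℂ] WithLp 2 (H × H))
    (hT₁ : ∀ u : WithLp 2 (H × H),
      T₁ u = (WithLp.equiv 2 (H × H)).symm (T u.fst, D u.fst)) :
    ∀ n : ℕ, ‖T₁ ^ n‖ ^ 2 ≤ c * (n + 1) := by
  have hc₀ : 0 ≤ c := by simpa using (sq_nonneg _).trans (hc 0)
  have hpow (k : ℕ) (x : H) : ‖(T ^ k) x‖ ^ 2 ≤ c * (k + 1) * ‖x‖ ^ 2 :=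
    (norm_apply_sq_le _ x).trans (by gcongr; exact hc k)
  intro n
  refine opNorm_sq_le_of_norm_apply_sq_le _ (by positivity) fun u => ?_
  rcases n with _ | m
  · have hfst := hpow 0 u.fst
    have hsnd := hpow 0 u.snd
    simp only [pow_zero, one_apply_eq_self, CharP.cast_eq_zero, zero_add, mul_one] at hfst hsnd ⊢
    rw [WithLp.prod_norm_sq_eq_of_L2]
    linarith
  · rw [norm_sq_pow_succ_apply_of_apply_eq hDpos.isSelfAdjoint hDD hT₁]
    calc (‖(T ^ (m + 2)) u.fst‖ ^ 2 + ‖(T ^ m) u.fst‖ ^ 2) / 2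
        ≤ (c * ((m + 2 : ℕ) + 1) * ‖u.fst‖ ^ 2 + c * (m + 1) * ‖u.fst‖ ^ 2) / 2 := by
          gcongr <;> apply hpow
      _ = c * ((m + 1 : ℕ) + 1) * ‖u.fst‖ ^ 2 := by push_cast; ring
      _ ≤ c * ((m + 1 : ℕ) + 1) * ‖u‖ ^ 2 := by gcongr; exact WithLp.norm_fst_le _ u

/-- If `T` is convex and `‖Tⁿ‖² ≤ c(n+1)` for all `n ≥ 0`, then the operator
`T₁ = [[T,0],[Δ^{1/2},0]]` on the Hilbert direct sum `H ⊕ H` also satisfies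
`‖T₁ⁿ‖² ≤ c(n+1)`. -/
theorem convex_lifting_step_growth
    {H : Type*} [NormedAddCommGroup H] [InnerProductSpace ℂ H] [CompleteSpace H]
    (T D : H →L[ℂ] H) (c : ℝ)
    (hc : ∀ n : ℕ, ‖T ^ n‖ ^ 2 ≤ c * (n + 1))
    (hDpos : D.IsPositive)
    (hDD : D ∘L D =
      (2 : ℂ)⁻¹ • (adjoint (T ^ 2) ∘L (T ^ 2) - (2 : ℂ) • (adjoint T ∘L T) + 1))
    (hconv : (adjoint (T ^ 2) ∘L (T ^ 2) - (2 : ℂ) • (adjoint T ∘L T) + 1).IsPositive)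
    (T₁ : WithLp 2 (H × H) →L[ℂ] WithLp 2 (H × H))
    (hT₁ : ∀ u : WithLp 2 (H × H),
      T₁ u = (WithLp.equiv 2 (H × H)).symm (T u.fst, D u.fst)) :
    ∀ n : ℕ, ‖T₁ ^ n‖ ^ 2 ≤ c * (n + 1) :=
  convex_lifting_step_growth_general T D c hc hDpos hDD T₁ hT₁
end

section
/- If T is convex (T*²T² - 2T*T + I ≥ 0) and Δ = (T*²T² - 2T*T + I)/2, then the operator T₁ = [[T,0],[Δ^{1/2},0]] on H ⊕ H is again convex. -/
/-!
Since `D` is self-adjoint with `2 D² = T*²T² - 2T*T + I`, the quantity `2‖Dx‖²` is exactly the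
convexity defect `‖T²x‖² - 2‖Tx‖² + ‖x‖²` of `T` at `x`. Expanding the norms on `H ⊕ H`, the
defect of `T₁` at `u = (x, y)` therefore collapses to `‖D(Tx)‖² + ‖y‖² ≥ 0`.
-/

open ContinuousLinearMap RCLike

namespace ContinuousLinearMap

variable {𝕜 E : Type*} [RCLike 𝕜] [NormedAddCommGroup E] [InnerProductSpace 𝕜 E] [CompleteSpace E]

/-- `T` is convex exactly when this operator is positive. -/
noncomputable def convexityOperator (T : E →L[𝕜] E) : E →L[𝕜] E :=
  adjoint (T ^ 2) ∘L T ^ 2 - (2 : 𝕜) • (adjoint T ∘L T) + 1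

theorem re_inner_convexityOperator_apply (T : E →L[𝕜] E) (x : E) :
    re (inner 𝕜 x (convexityOperator T x)) = ‖T (T x)‖ ^ 2 - 2 * ‖T x‖ ^ 2 + ‖x‖ ^ 2 := by
  have hT2 : (T ^ 2) x = T (T x) := by rw [pow_two, mul_apply_eq_comp]
  simp only [convexityOperator, add_apply, sub_apply, smul_apply, one_apply_eq_self,
    inner_add_right, inner_sub_right, inner_smul_right, map_add, map_sub, ofNat_mul_re,
    ← apply_norm_sq_eq_inner_adjoint_right, hT2, inner_self_eq_norm_sq]

theorem _root_.IsSelfAdjoint.norm_sq_apply_eq_re_inner_comp_self_s9 {D : E →L[𝕜] E}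
    (hD : IsSelfAdjoint D) (x : E) : ‖D x‖ ^ 2 = re (inner 𝕜 x ((D ∘L D) x)) := by
  rw [apply_norm_sq_eq_inner_adjoint_right, hD.adjoint_eq]

theorem _root_.IsSelfAdjoint.two_mul_norm_sq_apply_of_comp_self_eq {T D : E →L[𝕜] E}
    (hD : IsSelfAdjoint D) (hDD : D ∘L D = (2 : 𝕜)⁻¹ • convexityOperator T)
    (x : E) : 2 * ‖D x‖ ^ 2 = ‖T (T x)‖ ^ 2 - 2 * ‖T x‖ ^ 2 + ‖x‖ ^ 2 := by
  have hhalf : (2 : 𝕜)⁻¹ = ((2⁻¹ : ℝ) : 𝕜) := by push_cast; rfl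
  rw [hD.norm_sq_apply_eq_re_inner_comp_self_s9, hDD, smul_apply, inner_smul_right, hhalf,
    re_ofReal_mul, re_inner_convexityOperator_apply]
  ring

end ContinuousLinearMap

theorem convex_lifting_step_convex_general
    {H : Type*} [NormedAddCommGroup H] [InnerProductSpace ℂ H] [CompleteSpace H]
    (T D : H →L[ℂ] H)
    (hDpos : D.IsPositive)
    (hDD : D ∘L D =
      (2 : ℂ)⁻¹ • (adjoint (T ^ 2) ∘L (T ^ 2) - (2 : ℂ) • (adjoint T ∘L T) + 1))
    (T₁ : WithLp 2 (H × H) →L[ℂ] WithLp 2 (H × H))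
    (hT₁ : ∀ u : WithLp 2 (H × H),
      T₁ u = (WithLp.equiv 2 (H × H)).symm (T u.fst, D u.fst)) :
    ∀ u : WithLp 2 (H × H), 0 ≤ ‖T₁ (T₁ u)‖ ^ 2 - 2 * ‖T₁ u‖ ^ 2 + ‖u‖ ^ 2 := by
  intro u
  have hdefect := hDpos.isSelfAdjoint.two_mul_norm_sq_apply_of_comp_self_eq hDD u.fst
  have hexpand : ‖T₁ (T₁ u)‖ ^ 2 - 2 * ‖T₁ u‖ ^ 2 + ‖u‖ ^ 2 =
      ‖T (T u.fst)‖ ^ 2 + ‖D (T u.fst)‖ ^ 2 - 2 * (‖T u.fst‖ ^ 2 + ‖D u.fst‖ ^ 2) +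
        (‖u.fst‖ ^ 2 + ‖u.snd‖ ^ 2) := by
    simp only [hT₁, WithLp.prod_norm_sq_eq_of_L2, WithLp.equiv_symm_apply, WithLp.toLp_fst,
      WithLp.toLp_snd]
  rw [hexpand]
  linarith [sq_nonneg ‖D (T u.fst)‖, sq_nonneg ‖u.snd‖]

/-- If `T` is convex (`T*²T² - 2T*T + I ≥ 0`), then
`T₁ = [[T,0],[Δ^{1/2},0]]` on the Hilbert direct sum `H ⊕ H` is again convex:
`‖T₁²u‖² - 2‖T₁u‖² + ‖u‖² ≥ 0` for all `u`. -/
theorem convex_lifting_step_convex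
    {H : Type*} [NormedAddCommGroup H] [InnerProductSpace ℂ H] [CompleteSpace H]
    (T D : H →L[ℂ] H)
    (hDpos : D.IsPositive)
    (hDD : D ∘L D =
      (2 : ℂ)⁻¹ • (adjoint (T ^ 2) ∘L (T ^ 2) - (2 : ℂ) • (adjoint T ∘L T) + 1))
    (hconv : (adjoint (T ^ 2) ∘L (T ^ 2) - (2 : ℂ) • (adjoint T ∘L T) + 1).IsPositive)
    (T₁ : WithLp 2 (H × H) →L[ℂ] WithLp 2 (H × H))
    (hT₁ : ∀ u : WithLp 2 (H × H),
      T₁ u = (WithLp.equiv 2 (H × H)).symm (T u.fst, D u.fst)) :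
    ∀ u : WithLp 2 (H × H), 0 ≤ ‖T₁ (T₁ u)‖ ^ 2 - 2 * ‖T₁ u‖ ^ 2 + ‖u‖ ^ 2 :=
  convex_lifting_step_convex_general T D hDpos hDD T₁ hT₁
end

section
/- Let V be an isometry and Q a bounded operator on a Hilbert space K with Q² = 0 and VQ = QV. Then S = V + Q is a 3-isometry: Σ_{j=0}^{3}(-1)^j C(3,j) S*ʲSʲ = 0. -/
open ContinuousLinearMap

/-! Since `Q² = 0` and `V` commutes with `Q`, `(V + Q)ⁿ V = Vⁿ (V + n Q)`; as `V` is an isometry,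
`‖(V + Q)ⁿ x‖² = ‖V x + n • Q x‖²`, a quadratic polynomial in `n`, whose third finite difference
vanishes. -/

theorem Commute.add_pow_mul_of_mul_self_eq_zero {R : Type*} [Semiring R] {V Q : R}
    (hVQ : Commute V Q) (hQ : Q * Q = 0) (n : ℕ) :
    (V + Q) ^ n * V = V ^ n * (V + n • Q) := by
  induction n with
  | zero => simp
  | succ n ih =>
    have hcomm : Commute (V + Q) (V ^ n) := ((Commute.refl V).add_left hVQ.symm).pow_right n
    calc (V + Q) ^ (n + 1) * V = V ^ n * ((V + Q) * (V + n • Q)) := by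
          rw [pow_succ', mul_assoc, ih, ← mul_assoc, hcomm.eq, mul_assoc]
      _ = V ^ (n + 1) * (V + (n + 1) • Q) := by
          simp only [add_mul, mul_add, mul_smul_comm, hQ, hVQ.eq, add_zero,
            pow_succ, mul_assoc, succ_nsmul]
          abel

theorem norm_add_nsmul_sq {𝕜 E : Type*} [RCLike 𝕜] [SeminormedAddCommGroup E]
    [InnerProductSpace 𝕜 E] (u q : E) (n : ℕ) :
    ‖u + n • q‖ ^ 2 = ‖u‖ ^ 2 + 2 * n * RCLike.re (inner 𝕜 u q) + n ^ 2 * ‖q‖ ^ 2 := by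
  rw [← Nat.cast_smul_eq_nsmul 𝕜, norm_add_sq (𝕜 := 𝕜), inner_smul_right, norm_smul]
  simp [mul_pow]
  ring

theorem ContinuousLinearMap.norm_add_pow_apply {𝕜 E : Type*} [NormedField 𝕜]
    [SeminormedAddCommGroup E] [NormedSpace 𝕜 E] {V Q : E →L[𝕜] E}
    (hV : ∀ x, ‖V x‖ = ‖x‖) (hVQ : Commute V Q) (hQ : Q * Q = 0) (n : ℕ) (x : E) :
    ‖((V + Q) ^ n) x‖ = ‖V x + n • Q x‖ := by
  have hpow : ∀ (m : ℕ) (y : E), ‖(V ^ m) y‖ = ‖y‖ := by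
    intro m y
    induction m with
    | zero => rfl
    | succ m ih => rw [pow_succ', mul_apply_eq_comp, hV, ih]
  calc ‖((V + Q) ^ n) x‖ = ‖((V + Q) ^ n * V) x‖ := by
        rw [← (((Commute.refl V).add_right hVQ).pow_right n).eq, mul_apply_eq_comp, hV]
    _ = ‖V x + n • Q x‖ := by
        rw [hVQ.add_pow_mul_of_mul_self_eq_zero hQ, mul_apply_eq_comp, hpow, add_apply, smul_apply]

theorem isometry_plus_nilpotent_is_three_isometry_general
    {K : Type*} [NormedAddCommGroup K] [InnerProductSpace ℂ K]
    (V Q : K →L[ℂ] K)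
    (hV : ∀ x : K, ‖V x‖ = ‖x‖)
    (hQ : Q ∘L Q = 0)
    (hVQ : V ∘L Q = Q ∘L V) :
    ∀ x : K,
      ‖((V + Q) ^ 3) x‖ ^ 2 - 3 * ‖((V + Q) ^ 2) x‖ ^ 2
        + 3 * ‖(V + Q) x‖ ^ 2 - ‖x‖ ^ 2 = 0 := by
  intro x
  have hnorm := norm_add_pow_apply hV hVQ hQ
  have h1 : ‖(V + Q) x‖ = ‖V x + 1 • Q x‖ := by rw [← hnorm 1, pow_one]
  have h0 : ‖x‖ = ‖V x + 0 • Q x‖ := by rw [zero_smul, add_zero, hV]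
  rw [hnorm, hnorm, h1, h0]
  simp only [norm_add_nsmul_sq (𝕜 := ℂ)]
  push_cast
  ring

/-- If `V` is an isometry, `Q² = 0` and `VQ = QV`, then `S = V + Q` is a
3-isometry: `‖S³x‖² - 3‖S²x‖² + 3‖Sx‖² - ‖x‖² = 0` for all `x`. -/
theorem isometry_plus_nilpotent_is_three_isometry
    {K : Type*} [NormedAddCommGroup K] [InnerProductSpace ℂ K] [CompleteSpace K]
    (V Q : K →L[ℂ] K)
    (hV : ∀ x : K, ‖V x‖ = ‖x‖)
    (hQ : Q ∘L Q = 0)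
    (hVQ : V ∘L Q = Q ∘L V) :
    ∀ x : K,
      ‖((V + Q) ^ 3) x‖ ^ 2 - 3 * ‖((V + Q) ^ 2) x‖ ^ 2
        + 3 * ‖(V + Q) x‖ ^ 2 - ‖x‖ ^ 2 = 0 :=
  isometry_plus_nilpotent_is_three_isometry_general V Q hV hQ hVQ
end

section
/- Suppose T ∈ B(H) and A = A* ∈ B(H) satisfy Δ_T ≤ A ≤ T*AT, where Δ_T = T*T - I. Let D = closure of the range of (A - Δ_T), and define T̂ on H ⊕ ℓ²(ℕ, D) by T̂(h, f) = (Th, ((A-Δ_T)^{1/2}h) prepended to shifted f), i.e., T̂ = [[T, 0],[(A-Δ_T)^{1/2}, S₊]] where S₊ is the forward shift. Then Δ_{T̂} = A ⊕ 0 and T̂ is a convex lifting of T. -/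
open ContinuousLinearMap

/-!
Since `S₊` is an isometry whose range is orthogonal to the first copy of `H`, and
`R*R = A - T*T + I`, the block operator satisfies
`⟪T̂ u, T̂ v⟫ = ⟪T u₁, T v₁⟫ + ⟪R u₁, R v₁⟫ + ⟪u₂, v₂⟫ = ⟪A u₁, v₁⟫ + ⟪u, v⟫`,
which is exactly `T̂*T̂ - I = A ⊕ 0`. Hence `‖T̂ u‖² - ‖u‖² = ⟪A u₁, u₁⟫`, and as the first
component of `T̂ u` is `T u₁`, convexity reduces to `⟪A T u₁, T u₁⟫ ≥ ⟪A u₁, u₁⟫`, i.e. `A ≤ T*AT`.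
-/

section ForwardShift

variable {𝕜 E : Type*} [RCLike 𝕜] [NormedAddCommGroup E] [InnerProductSpace 𝕜 E]

def IsForwardShift (S : lp (fun _ : ℕ => E) 2 → lp (fun _ : ℕ => E) 2) : Prop :=
  (∀ f, S f 0 = 0) ∧ ∀ f n, S f (n + 1) = f n

variable {S : lp (fun _ : ℕ => E) 2 → lp (fun _ : ℕ => E) 2}

theorem IsForwardShift.inner_map_map (hS : IsForwardShift S) (f g : lp (fun _ : ℕ => E) 2) :
    inner 𝕜 (S f) (S g) = inner 𝕜 f g := by
  rw [lp.inner_eq_tsum, lp.inner_eq_tsum,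
    (lp.summable_inner (𝕜 := 𝕜) (S f) (S g)).tsum_eq_zero_add]
  simp [hS.1, hS.2]

theorem IsForwardShift.inner_single_zero_add_map (hS : IsForwardShift S) (x y : E)
    (f g : lp (fun _ : ℕ => E) 2) :
    inner 𝕜 (lp.single 2 0 x + S f) (lp.single 2 0 y + S g) = inner 𝕜 x y + inner 𝕜 f g := by
  simp only [inner_add_left, inner_add_right, lp.inner_single_left, lp.inner_single_right,
    lp.single_apply_self, hS.1, inner_zero_left, inner_zero_right, hS.inner_map_map]
  ring

end ForwardShift

section Adjoint

variable {𝕜 E : Type*} [RCLike 𝕜] [NormedAddCommGroup E] [InnerProductSpace 𝕜 E] [CompleteSpace E]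

theorem inner_apply_add_inner_apply_eq {T A R : E →L[𝕜] E}
    (hR : adjoint R ∘L R = A - (adjoint T ∘L T - 1)) (x y : E) :
    inner 𝕜 (T x) (T y) + inner 𝕜 (R x) (R y) = inner 𝕜 (A x) y + inner 𝕜 x y := by
  rw [← adjoint_inner_left T, ← adjoint_inner_left R, ← inner_add_left, ← comp_apply,
    ← comp_apply, hR, ← inner_add_left]
  congr 1
  simp only [sub_apply, comp_apply]
  abel

theorem adjoint_comp_self_sub_one_apply_eq {X : E →L[𝕜] E} {u w : E}
    (h : ∀ v, inner 𝕜 (X u) (X v) = inner 𝕜 w v + inner 𝕜 u v) :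
    (adjoint X ∘L X - 1) u = w := by
  refine ext_inner_right 𝕜 fun v => ?_
  rw [sub_apply, comp_apply, one_apply_eq_self, inner_sub_left, adjoint_inner_left, h]
  ring

end Adjoint

section Lifting

variable {𝕜 H F : Type*} [RCLike 𝕜] [NormedAddCommGroup H] [InnerProductSpace 𝕜 H]
  [NormedAddCommGroup F] [InnerProductSpace 𝕜 F]

theorem inner_apply_apply_eq_inner_fst_add_inner [CompleteSpace H] {T A R : H →L[𝕜] H}
    (hR : adjoint R ∘L R = A - (adjoint T ∘L T - 1))
    {S : lp (fun _ : ℕ => H) 2 → lp (fun _ : ℕ => H) 2} (hS : IsForwardShift S)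
    {X : WithLp 2 (H × lp (fun _ : ℕ => H) 2) → WithLp 2 (H × lp (fun _ : ℕ => H) 2)}
    (hX : ∀ u, X u = (WithLp.equiv 2 _).symm (T u.fst, lp.single 2 0 (R u.fst) + S u.snd))
    (u v : WithLp 2 (H × lp (fun _ : ℕ => H) 2)) :
    inner 𝕜 (X u) (X v) = inner 𝕜 (A u.fst) v.fst + inner 𝕜 u v := by
  rw [hX, hX, WithLp.prod_inner_apply, WithLp.prod_inner_apply]
  simp only [WithLp.equiv_symm_apply, WithLp.ofLp_toLp, hS.inner_single_zero_add_map]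
  rw [← add_assoc, inner_apply_add_inner_apply_eq hR]
  simp only [WithLp.fst, WithLp.snd]
  ring

theorem norm_sq_apply_eq_norm_sq_add_re_inner_fst {A : H →L[𝕜] H}
    {X : WithLp 2 (H × F) → WithLp 2 (H × F)}
    (hX : ∀ u v, inner 𝕜 (X u) (X v) = inner 𝕜 (A u.fst) v.fst + inner 𝕜 u v)
    (u : WithLp 2 (H × F)) :
    ‖X u‖ ^ 2 = ‖u‖ ^ 2 + RCLike.re (inner 𝕜 (A u.fst) u.fst) := by
  have h := congrArg RCLike.re (hX u u)
  rwa [inner_self_eq_norm_sq, map_add, inner_self_eq_norm_sq, add_comm] at h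

end Lifting

theorem convex_lifting_construction_general
    {H : Type*} [NormedAddCommGroup H] [InnerProductSpace ℂ H] [CompleteSpace H]
    (T A R : H →L[ℂ] H)
    (hAup : (adjoint T ∘L (A ∘L T) - A).IsPositive)
    (hRpos : R.IsPositive)
    (hRR : R ∘L R = A - (adjoint T ∘L T - 1))
    (Sh : lp (fun _ : ℕ => H) 2 →L[ℂ] lp (fun _ : ℕ => H) 2)
    (hSh0 : ∀ f : lp (fun _ : ℕ => H) 2, (Sh f : ∀ _ : ℕ, H) 0 = 0)
    (hShS : ∀ (f : lp (fun _ : ℕ => H) 2) (n : ℕ),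
      (Sh f : ∀ _ : ℕ, H) (n + 1) = (f : ∀ _ : ℕ, H) n)
    (Th : WithLp 2 (H × lp (fun _ : ℕ => H) 2) →L[ℂ]
      WithLp 2 (H × lp (fun _ : ℕ => H) 2))
    (hTh : ∀ u : WithLp 2 (H × lp (fun _ : ℕ => H) 2),
      Th u = (WithLp.equiv 2 (H × lp (fun _ : ℕ => H) 2)).symm
        (T u.fst, lp.single 2 0 (R u.fst) + Sh u.snd)) :
    (∀ u : WithLp 2 (H × lp (fun _ : ℕ => H) 2),
      (adjoint Th ∘L Th - 1) u =
        (WithLp.equiv 2 (H × lp (fun _ : ℕ => H) 2)).symm (A u.fst, 0)) ∧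
    (∀ u : WithLp 2 (H × lp (fun _ : ℕ => H) 2),
      0 ≤ ‖Th (Th u)‖ ^ 2 - 2 * ‖Th u‖ ^ 2 + ‖u‖ ^ 2) ∧
    (∀ u : WithLp 2 (H × lp (fun _ : ℕ => H) 2), (Th u).fst = T u.fst) := by
  have hShift : IsForwardShift (Sh ·) := ⟨hSh0, hShS⟩
  have hR : adjoint R ∘L R = A - (adjoint T ∘L T - 1) := by
    rw [hRpos.isSelfAdjoint.adjoint_eq, hRR]
  have hinner := inner_apply_apply_eq_inner_fst_add_inner hR hShift hTh
  have hfst : ∀ u, (Th u).fst = T u.fst := fun u => by rw [hTh]; rfl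
  refine ⟨fun u => adjoint_comp_self_sub_one_apply_eq fun v => ?_, fun u => ?_, hfst⟩
  · rw [hinner, WithLp.prod_inner_apply]
    simp
  · have hnorm := norm_sq_apply_eq_norm_sq_add_re_inner_fst hinner
    have hAT := hAup.re_inner_nonneg_left u.fst
    rw [sub_apply, inner_sub_left, map_sub, comp_apply, comp_apply, adjoint_inner_left] at hAT
    rw [hnorm (Th u), hnorm u, hfst]
    linarith

/-- Given `T` and a selfadjoint `A` with `Δ_T ≤ A ≤ T*AT` (`Δ_T = T*T - I`),
let `R = (A - Δ_T)^{1/2}` and let `T̂ = [[T, 0],[R, S₊]]` act on the Hilbert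
direct sum `H ⊕ ℓ²(ℕ, H)`, where `S₊` is the forward shift. Then
`Δ_{T̂} = A ⊕ 0`, `T̂` is convex, and `T̂` is a lifting of `T`. -/
theorem convex_lifting_construction
    {H : Type*} [NormedAddCommGroup H] [InnerProductSpace ℂ H] [CompleteSpace H]
    (T A R : H →L[ℂ] H)
    (hAsa : IsSelfAdjoint A)
    (hAlow : (A - (adjoint T ∘L T - 1)).IsPositive)
    (hAup : (adjoint T ∘L (A ∘L T) - A).IsPositive)
    (hRpos : R.IsPositive)
    (hRR : R ∘L R = A - (adjoint T ∘L T - 1))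
    (Sh : lp (fun _ : ℕ => H) 2 →L[ℂ] lp (fun _ : ℕ => H) 2)
    (hSh0 : ∀ f : lp (fun _ : ℕ => H) 2, (Sh f : ∀ _ : ℕ, H) 0 = 0)
    (hShS : ∀ (f : lp (fun _ : ℕ => H) 2) (n : ℕ),
      (Sh f : ∀ _ : ℕ, H) (n + 1) = (f : ∀ _ : ℕ, H) n)
    (Th : WithLp 2 (H × lp (fun _ : ℕ => H) 2) →L[ℂ]
      WithLp 2 (H × lp (fun _ : ℕ => H) 2))
    (hTh : ∀ u : WithLp 2 (H × lp (fun _ : ℕ => H) 2),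
      Th u = (WithLp.equiv 2 (H × lp (fun _ : ℕ => H) 2)).symm
        (T u.fst, lp.single 2 0 (R u.fst) + Sh u.snd)) :
    (∀ u : WithLp 2 (H × lp (fun _ : ℕ => H) 2),
      (adjoint Th ∘L Th - 1) u =
        (WithLp.equiv 2 (H × lp (fun _ : ℕ => H) 2)).symm (A u.fst, 0)) ∧
    (∀ u : WithLp 2 (H × lp (fun _ : ℕ => H) 2),
      0 ≤ ‖Th (Th u)‖ ^ 2 - 2 * ‖Th u‖ ^ 2 + ‖u‖ ^ 2) ∧
    (∀ u : WithLp 2 (H × lp (fun _ : ℕ => H) 2), (Th u).fst = T u.fst) :=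
  convex_lifting_construction_general T A R hAup hRpos hRR Sh hSh0 hShS Th hTh
end

section
/- An operator T on H admits a convex lifting T̂ = [[T, 0],[X, V]] with V an isometry and V*X = 0 if and only if there exists a selfadjoint A ∈ B(H) with Δ_T ≤ A ≤ T*AT, where Δ_T = T*T - I. (Forward direction: given such a lifting, A := X*X + Δ_T works.) -/
/-!
If `V` is an isometry and `V*X = 0`, then `‖T̂ (x, y)‖² = ‖T x‖² + ‖X x‖² + ‖y‖²`, and the
convexity defect `‖T̂²u‖² - 2‖T̂u‖² + ‖u‖²` of `T̂` at `u = (x, y)` equals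
`⟪(T*AT - A) x, x⟫` for `A = X*X + Δ_T`. So `T̂` is convex iff `A ≤ T*AT`, while
`A - Δ_T = X*X ≥ 0` holds automatically. Conversely, write `A - Δ_T = S*S` and take for `X` the
operator `S` followed by the embedding of `H` as the `0`-th coordinate of `ℓ²(ℕ, H)`, and for
`V` the unilateral shift, whose range is orthogonal to that coordinate.
-/

open ContinuousLinearMap

/-- A witness that `T` admits a convex lifting `T̂ = [[T,0],[X,V]]` on `H ⊕ H'`
with `V` an isometry and `V*X = 0`. Convexity of `T̂` is expressed by
`‖T̂²u‖² - 2‖T̂u‖² + ‖u‖² ≥ 0` for all `u`. -/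
structure ConvexIsometricLiftingWitness
    (H : Type) [NormedAddCommGroup H] [InnerProductSpace ℂ H] [CompleteSpace H]
    (T : H →L[ℂ] H) where
  H' : Type
  [inst1 : NormedAddCommGroup H']
  [inst2 : InnerProductSpace ℂ H']
  [inst3 : CompleteSpace H']
  X : H →L[ℂ] H'
  V : H' →L[ℂ] H'
  hV : ∀ y : H', ‖V y‖ = ‖y‖
  hVX : adjoint V ∘L X = 0
  That : WithLp 2 (H × H') →L[ℂ] WithLp 2 (H × H')
  hThat : ∀ u : WithLp 2 (H × H'),
    That u = (WithLp.equiv 2 (H × H')).symm (T u.fst, X u.fst + V u.snd)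
  hconvex : ∀ u : WithLp 2 (H × H'),
    0 ≤ ‖That (That u)‖ ^ 2 - 2 * ‖That u‖ ^ 2 + ‖u‖ ^ 2

namespace lp

variable {𝕜 E : Type*} [NormedField 𝕜] [NormedAddCommGroup E] [NormedSpace 𝕜 E]

theorem memℓp_two_cons_zero (f : lp (fun _ : ℕ => E) 2) :
    Memℓp (fun | 0 => 0 | n + 1 => f n : ℕ → E) 2 := by
  rw [memℓp_gen_iff (by norm_num)]
  exact (summable_nat_add_iff 1).mp ((memℓp_gen_iff (by norm_num)).mp f.2)

def rightShift : lp (fun _ : ℕ => E) 2 →ₗᵢ[𝕜] lp (fun _ : ℕ => E) 2 where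
  toFun f := ⟨_, memℓp_two_cons_zero f⟩
  map_add' f g := by ext (_ | n); exacts [(add_zero 0).symm, rfl]
  map_smul' c f := by ext (_ | n); exacts [(smul_zero c).symm, rfl]
  norm_map' f := by
    set g : lp (fun _ : ℕ => E) 2 := ⟨_, memℓp_two_cons_zero f⟩
    have hg : HasSum (fun n => ‖g n‖ ^ (2 : ENNReal).toReal) (‖f‖ ^ (2 : ENNReal).toReal) := by
      have hg0 : g 0 = 0 := rfl
      simpa [hg0] using (hasSum_nat_add_iff (f := fun n => ‖g n‖ ^ (2 : ENNReal).toReal) 1).mp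
        (lp.hasSum_norm (by norm_num) f)
    simpa using (hg.unique (lp.hasSum_norm (by norm_num) g)).symm

@[simp] theorem rightShift_apply_zero (f : lp (fun _ : ℕ => E) 2) :
    (rightShift (𝕜 := 𝕜) f : ℕ → E) 0 = 0 := rfl

end lp

section Lifting

open RCLike
open scoped InnerProductSpace

variable {𝕜 E F : Type*} [RCLike 𝕜] [NormedAddCommGroup E] [InnerProductSpace 𝕜 E]
  [NormedAddCommGroup F] [InnerProductSpace 𝕜 F]

/-- The block operator `[[T, 0], [X, V]]` on `E ⊕ F`. -/
def liftingMatrix (T : E →L[𝕜] E) (X : E →L[𝕜] F) (V : F →L[𝕜] F) :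
    WithLp 2 (E × F) →L[𝕜] WithLp 2 (E × F) :=
  (WithLp.prodContinuousLinearEquiv 2 𝕜 E F).symm.toContinuousLinearMap ∘L
    ((T ∘L fst 𝕜 E F).prod (X.coprod V)) ∘L
    (WithLp.prodContinuousLinearEquiv 2 𝕜 E F).toContinuousLinearMap

@[simp] theorem liftingMatrix_apply_fst (T : E →L[𝕜] E) (X : E →L[𝕜] F) (V : F →L[𝕜] F)
    (u : WithLp 2 (E × F)) : (liftingMatrix T X V u).fst = T u.fst :=
  rfl

@[simp] theorem liftingMatrix_apply_snd (T : E →L[𝕜] E) (X : E →L[𝕜] F) (V : F →L[𝕜] F)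
    (u : WithLp 2 (E × F)) : (liftingMatrix T X V u).snd = X u.fst + V u.snd :=
  rfl

variable [CompleteSpace F] {T A : E →L[𝕜] E} {X : E →L[𝕜] F} {V : F →L[𝕜] F}

theorem norm_add_sq_of_adjoint_comp_eq_zero (hV : ∀ y, ‖V y‖ = ‖y‖)
    (hVX : adjoint V ∘L X = 0) (x : E) (y : F) :
    ‖X x + V y‖ ^ 2 = ‖X x‖ ^ 2 + ‖y‖ ^ 2 := by
  have hXV : ⟪X x, V y⟫_𝕜 = 0 := by
    rw [← adjoint_inner_left, ← comp_apply, hVX, zero_apply, inner_zero_left]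
  rw [norm_add_sq (𝕜 := 𝕜), hXV, hV]
  simp

theorem norm_liftingMatrix_apply_sq (hV : ∀ y, ‖V y‖ = ‖y‖) (hVX : adjoint V ∘L X = 0)
    (u : WithLp 2 (E × F)) :
    ‖liftingMatrix T X V u‖ ^ 2 = ‖T u.fst‖ ^ 2 + ‖X u.fst‖ ^ 2 + ‖u.snd‖ ^ 2 := by
  rw [WithLp.prod_norm_sq_eq_of_L2, liftingMatrix_apply_fst, liftingMatrix_apply_snd,
    norm_add_sq_of_adjoint_comp_eq_zero hV hVX, add_assoc]

variable [CompleteSpace E]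

theorem re_inner_adjoint_conj_sub_apply_self (x : E) :
    re ⟪(adjoint T ∘L (A ∘L T) - A) x, x⟫_𝕜 = re ⟪A (T x), T x⟫_𝕜 - re ⟪A x, x⟫_𝕜 := by
  rw [sub_apply, inner_sub_left, map_sub, comp_apply, comp_apply, adjoint_inner_left]

theorem eq_adjoint_comp_self_add (hA : adjoint X ∘L X = A - (adjoint T ∘L T - 1)) :
    A = adjoint X ∘L X + (adjoint T ∘L T - 1) :=
  sub_eq_iff_eq_add.mp hA.symm

theorem isSelfAdjoint_of_adjoint_comp_self_eq (hA : adjoint X ∘L X = A - (adjoint T ∘L T - 1)) :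
    IsSelfAdjoint A := by
  rw [eq_adjoint_comp_self_add hA]
  exact (isPositive_adjoint_comp_self X).isSelfAdjoint.add
    ((isPositive_adjoint_comp_self T).isSelfAdjoint.sub (.one _))

theorem re_inner_apply_self_of_adjoint_comp_self_eq
    (hA : adjoint X ∘L X = A - (adjoint T ∘L T - 1)) (x : E) :
    re ⟪A x, x⟫_𝕜 = ‖X x‖ ^ 2 + ‖T x‖ ^ 2 - ‖x‖ ^ 2 := by
  rw [eq_adjoint_comp_self_add hA, apply_norm_sq_eq_inner_adjoint_left,
    apply_norm_sq_eq_inner_adjoint_left, ← inner_self_eq_norm_sq (𝕜 := 𝕜)]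
  simp only [add_apply, sub_apply, one_apply_eq_self, inner_add_left, inner_sub_left, map_add,
    map_sub, add_sub_assoc]

theorem norm_liftingMatrix_sq_sub_eq (hV : ∀ y, ‖V y‖ = ‖y‖) (hVX : adjoint V ∘L X = 0)
    (hA : adjoint X ∘L X = A - (adjoint T ∘L T - 1)) (u : WithLp 2 (E × F)) :
    ‖liftingMatrix T X V (liftingMatrix T X V u)‖ ^ 2 - 2 * ‖liftingMatrix T X V u‖ ^ 2 + ‖u‖ ^ 2
      = re ⟪(adjoint T ∘L (A ∘L T) - A) u.fst, u.fst⟫_𝕜 := by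
  rw [norm_liftingMatrix_apply_sq hV hVX, norm_liftingMatrix_apply_sq hV hVX,
    WithLp.prod_norm_sq_eq_of_L2 u, liftingMatrix_apply_fst, liftingMatrix_apply_snd,
    norm_add_sq_of_adjoint_comp_eq_zero hV hVX,
    re_inner_adjoint_conj_sub_apply_self, re_inner_apply_self_of_adjoint_comp_self_eq hA,
    re_inner_apply_self_of_adjoint_comp_self_eq hA]
  ring

theorem convex_liftingMatrix_iff (hV : ∀ y, ‖V y‖ = ‖y‖) (hVX : adjoint V ∘L X = 0)
    (hA : adjoint X ∘L X = A - (adjoint T ∘L T - 1)) :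
    (∀ u, 0 ≤ ‖liftingMatrix T X V (liftingMatrix T X V u)‖ ^ 2
      - 2 * ‖liftingMatrix T X V u‖ ^ 2 + ‖u‖ ^ 2) ↔
      (adjoint T ∘L (A ∘L T) - A).IsPositive := by
  simp only [norm_liftingMatrix_sq_sub_eq hV hVX hA]
  refine ⟨fun h => isPositive_def'.mpr ⟨?_, fun x => ?_⟩, fun h u => h.re_inner_nonneg_left _⟩
  · exact ((isSelfAdjoint_of_adjoint_comp_self_eq hA).adjoint_conj T).sub
      (isSelfAdjoint_of_adjoint_comp_self_eq hA)
  · exact h (WithLp.toLp 2 (x, 0))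

end Lifting

theorem exists_isometry_perp_adjoint_comp_self_eq {H : Type*} [NormedAddCommGroup H]
    [InnerProductSpace ℂ H] [CompleteSpace H] {B : H →L[ℂ] H} (hB : 0 ≤ B) :
    ∃ (X : H →L[ℂ] lp (fun _ : ℕ => H) 2)
      (V : lp (fun _ : ℕ => H) 2 →L[ℂ] lp (fun _ : ℕ => H) 2),
      (∀ y, ‖V y‖ = ‖y‖) ∧ adjoint V ∘L X = 0 ∧ adjoint X ∘L X = B := by
  obtain ⟨S, rfl⟩ := CStarAlgebra.nonneg_iff_eq_star_mul_self.mp hB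
  let J := lp.singleContinuousLinearMap ℂ (fun _ : ℕ => H) 2 0
  have hJ : adjoint J ∘L J = 1 := (norm_map_iff_adjoint_comp_self J).mp
    (lp.norm_single (E := fun _ : ℕ => H) (p := 2) (by norm_num) 0)
  refine ⟨J ∘L S, lp.rightShift.toContinuousLinearMap, lp.rightShift.norm_map, ?_, ?_⟩
  · ext x : 1
    refine ext_inner_right ℂ fun y => ?_
    simp [adjoint_inner_left, J, lp.inner_single_left]
  · rw [adjoint_comp, comp_assoc, ← comp_assoc _ J, hJ, one_def, id_comp, star_eq_adjoint, mul_def]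

/-- `T` admits a convex lifting `T̂ = [[T,0],[X,V]]` with `V` an isometry and
`V*X = 0` iff there is a selfadjoint `A` with `Δ_T ≤ A ≤ T*AT`
(`Δ_T = T*T - I`). -/
theorem convex_isometric_lifting_iff
    (H : Type) [NormedAddCommGroup H] [InnerProductSpace ℂ H] [CompleteSpace H]
    (T : H →L[ℂ] H) :
    Nonempty (ConvexIsometricLiftingWitness H T) ↔
      ∃ A : H →L[ℂ] H, IsSelfAdjoint A ∧
        (A - (adjoint T ∘L T - 1)).IsPositive ∧
        (adjoint T ∘L (A ∘L T) - A).IsPositive := by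
  constructor
  · rintro ⟨⟨H', X, V, hV, hVX, That, hThat, hconvex⟩⟩
    obtain rfl : That = liftingMatrix T X V := ContinuousLinearMap.ext hThat
    have hA : adjoint X ∘L X = (adjoint X ∘L X + (adjoint T ∘L T - 1)) - (adjoint T ∘L T - 1) :=
      (add_sub_cancel_right _ _).symm
    exact ⟨_, isSelfAdjoint_of_adjoint_comp_self_eq hA, hA ▸ isPositive_adjoint_comp_self X,
      (convex_liftingMatrix_iff hV hVX hA).mp hconvex⟩
  · rintro ⟨A, -, hΔA, hTAT⟩
    obtain ⟨X, V, hV, hVX, hA⟩ :=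
      exists_isometry_perp_adjoint_comp_self_eq ((nonneg_iff_isPositive _).mpr hΔA)
    exact ⟨⟨_, X, V, hV, hVX, liftingMatrix T X V, fun _ => rfl,
      (convex_liftingMatrix_iff hV hVX hA).mpr hTAT⟩⟩
end
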